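/- Total additivity of the twisted extremal Kostant degree in type B: let n ≥ 2, let λ and μ be dominant weights of B_n, and let w be any signed permutation of {1,…,n}. Then n^ν(λ + μ, w) = n^ν(λ, w) + n^ν(μ, w). -/

import Mathlib

/-- The short positive roots of type `B_n` in `ℝ^n`: the vectors `ε_i`. -/
def typeBShortRoots (n : ℕ) : Set (Fin n → ℝ) :=
  {v | ∃ i : Fin n, v = Pi.single i 1}

/-- The long positive roots of type `B_n` in `ℝ^n`: the vectors `ε_i - ε_j` and
`ε_i + ε_j` for `i < j`. -/
def typeBLongRoots (n : ℕ) : Set (Fin n → ℝ) :=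
  {v | ∃ i j : Fin n, i < j ∧
    (v = Pi.single i 1 - Pi.single j 1 ∨ v = Pi.single i 1 + Pi.single j 1)}

/-- The set of twisted weights `ν_{β₁} + ⋯ + ν_{β_M}` of decompositions of `v` into
positive roots of `B_n` (with repetitions), where `ν_β = 1` for short `β` and
`ν_β = 2` for long `β`.  A decomposition is encoded as a list of pairs
`(β, ν_β)`. -/
def typeBTwistedWeights (n : ℕ) (v : Fin n → ℝ) : Set ℕ :=
  {N | ∃ l : List ((Fin n → ℝ) × ℕ),
    (∀ p ∈ l, (p.1 ∈ typeBShortRoots n ∧ p.2 = 1) ∨ (p.1 ∈ typeBLongRoots n ∧ p.2 = 2)) ∧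
    (l.map Prod.fst).sum = v ∧ (l.map Prod.snd).sum = N}

/-- A dominant weight of `B_n`: `λ₁ ≥ ⋯ ≥ λ_n ≥ 0` with all entries integers or all
entries in `ℤ + 1/2`. -/
def IsDominantB (n : ℕ) (lam : Fin n → ℝ) : Prop :=
  (∀ i j : Fin n, i ≤ j → lam j ≤ lam i) ∧ (∀ i, 0 ≤ lam i) ∧
    ((∀ i, ∃ k : ℤ, lam i = k) ∨ (∀ i, ∃ k : ℤ, lam i = k + 1/2))

/-!
Every positive root `β` has `‖β‖₁ ≤ ν_β`, so `n^ν(v) ≥ ‖v‖₁` for every `v`. Conversely, an integral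
`v` with nonnegative prefix sums is peeled greedily: pair the first negative coordinate `j` with an
earlier positive one `i` through `ε_i - ε_j`, and once no coordinate is negative remove short roots
`ε_i`; each step lowers `‖v‖₁` by exactly `ν_β`. Since `λ - wλ` is such a vector for dominant `λ`,
`n^ν(λ, w) = ‖λ - wλ‖₁`. Finally the sign of `(λ - wλ)_j` depends only on `w`, so the `ℓ¹` norms
of `λ - wλ` and `μ - wμ` add.
-/

open Finset

section

variable {n : ℕ}

lemma sum_abs_pi_single (i : Fin n) : ∑ k, |(Pi.single i (1 : ℝ) : Fin n → ℝ) k| = 1 := by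
  rw [Fintype.sum_eq_single i fun k hk => by simp [Pi.single_eq_of_ne hk]]
  simp

lemma sum_abs_le_of_root {β : Fin n → ℝ} {ν : ℕ}
    (h : (β ∈ typeBShortRoots n ∧ ν = 1) ∨ (β ∈ typeBLongRoots n ∧ ν = 2)) :
    ∑ k, |β k| ≤ ν := by
  rcases h with ⟨⟨i, rfl⟩, rfl⟩ | ⟨⟨i, j, -, hβ⟩, rfl⟩
  · simp [sum_abs_pi_single]
  · set εi : Fin n → ℝ := Pi.single i 1
    set εj : Fin n → ℝ := Pi.single j 1
    have hle : ∀ k, |β k| ≤ |εi k| + |εj k| := by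
      rcases hβ with rfl | rfl
      exacts [fun k => abs_sub _ _, fun k => abs_add_le _ _]
    calc ∑ k, |β k| ≤ ∑ k, (|εi k| + |εj k|) :=
          sum_le_sum fun k _ => hle k
      _ = 2 := by rw [sum_add_distrib, sum_abs_pi_single, sum_abs_pi_single]; norm_num

lemma sum_abs_le_of_mem_typeBTwistedWeights {v : Fin n → ℝ} {N : ℕ}
    (hN : N ∈ typeBTwistedWeights n v) : ∑ k, |v k| ≤ N := by
  obtain ⟨l, hl, rfl, rfl⟩ := hN
  induction l with
  | nil => simp
  | cons p l ih =>
    simp only [List.map_cons, List.sum_cons, Nat.cast_add, Pi.add_apply]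
    calc ∑ k, |p.1 k + (l.map Prod.fst).sum k|
        ≤ ∑ k, (|p.1 k| + |(l.map Prod.fst).sum k|) := sum_le_sum fun k _ => abs_add_le _ _
      _ ≤ _ := by
        rw [sum_add_distrib]
        exact add_le_add (sum_abs_le_of_root (hl p (by simp)))
          (ih fun q hq => hl q (by simp [hq]))

lemma add_mem_typeBTwistedWeights {v w : Fin n → ℝ} {a b : ℕ}
    (ha : a ∈ typeBTwistedWeights n v) (hb : b ∈ typeBTwistedWeights n w) :
    a + b ∈ typeBTwistedWeights n (v + w) := by
  obtain ⟨l₁, hl₁, rfl, rfl⟩ := ha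
  obtain ⟨l₂, hl₂, rfl, rfl⟩ := hb
  refine ⟨l₁ ++ l₂, fun p hp => ?_, by simp, by simp⟩
  rcases List.mem_append.1 hp with h | h
  exacts [hl₁ p h, hl₂ p h]

lemma zero_mem_typeBTwistedWeights_zero : 0 ∈ typeBTwistedWeights n 0 :=
  ⟨[], by simp, by simp, by simp⟩

lemma one_mem_typeBTwistedWeights_single (i : Fin n) :
    1 ∈ typeBTwistedWeights n (Pi.single i 1) :=
  ⟨[(Pi.single i 1, 1)], fun p hp => by rw [List.mem_singleton.1 hp]; exact Or.inl ⟨⟨i, rfl⟩, rfl⟩,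
    by simp, by simp⟩

lemma two_mem_typeBTwistedWeights_single_sub_single {i j : Fin n} (hij : i < j) :
    2 ∈ typeBTwistedWeights n (Pi.single i 1 - Pi.single j 1) :=
  ⟨[(Pi.single i 1 - Pi.single j 1, 2)],
    fun p hp => by rw [List.mem_singleton.1 hp]; exact Or.inr ⟨⟨i, j, hij, Or.inl rfl⟩, rfl⟩,
    by simp, by simp⟩

/-- Prefix sums are the coordinates in the simple roots `ε_k - ε_{k+1}`, `ε_n`, so this says
that `v` lies in the cone spanned by the positive roots. -/
def PrefixNonneg {M : Type*} [AddCommMonoid M] [Preorder M] (v : Fin n → M) : Prop :=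
  ∀ k, 0 ≤ ∑ i ∈ Iic k, v i

lemma PrefixNonneg.add {M : Type*} [AddCommMonoid M] [PartialOrder M] [IsOrderedAddMonoid M]
    {p q : Fin n → M} (hp : PrefixNonneg p) (hq : PrefixNonneg q) : PrefixNonneg (p + q) :=
  fun k => by simpa only [Pi.add_apply, sum_add_distrib] using add_nonneg (hp k) (hq k)

lemma prefixNonneg_intCast_iff {m : Fin n → ℤ} :
    PrefixNonneg ((↑) ∘ m : Fin n → ℝ) ↔ PrefixNonneg m := by
  simp only [PrefixNonneg, Function.comp_apply]
  norm_cast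

lemma sum_Iic_add_single {M : Type*} [AddCommMonoid M] (m : Fin n → M) (i k : Fin n) (d : M) :
    ∑ x ∈ Iic k, (m + Pi.single i d : Fin n → M) x = ∑ x ∈ Iic k, m x + if i ≤ k then d else 0 := by
  simp only [Pi.add_apply, sum_add_distrib, sum_pi_single', mem_Iic]

lemma sum_natAbs_add_single {ι : Type*} [Fintype ι] [DecidableEq ι] (m : ι → ℤ) (i : ι) (d : ℤ) :
    ∑ k, ((m + Pi.single i d : ι → ℤ) k).natAbs + (m i).natAbs =
      ∑ k, (m k).natAbs + (m i + d).natAbs := by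
  rw [← add_sum_erase _ _ (mem_univ i), ← add_sum_erase _ _ (mem_univ i),
    sum_congr rfl fun k hk => by rw [Pi.add_apply, Pi.single_eq_of_ne (ne_of_mem_erase hk),
      add_zero]]
  simp only [Pi.add_apply, Pi.single_eq_same]
  ring

lemma PrefixNonneg.exists_sub_long_root {m : Fin n → ℤ} (hm : PrefixNonneg m) (hneg : ∃ j, m j < 0) :
    ∃ m' : Fin n → ℤ, PrefixNonneg m' ∧ ∑ k, (m' k).natAbs + 2 = ∑ k, (m k).natAbs ∧
      2 ∈ typeBTwistedWeights n ((↑) ∘ m - (↑) ∘ m' : Fin n → ℝ) := by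
  obtain ⟨j, hj : m j < 0, hjmin⟩ := wellFounded_lt.has_min {j | m j < 0} hneg
  have hbefore : ∀ x < j, 0 ≤ m x := fun x hx => not_lt.1 fun h => hjmin x h hx
  obtain ⟨i, hij, hi⟩ : ∃ i < j, 0 < m i := by
    by_contra! h
    have hPj := hm j
    rw [← Iio_insert, sum_insert (by simp),
      sum_eq_zero fun x hx => le_antisymm (h x (mem_Iio.1 hx)) (hbefore x (mem_Iio.1 hx))] at hPj
    exact absurd hj (by simpa using hPj)
  refine ⟨m + Pi.single i (-1) + Pi.single j 1, fun k => ?_, ?_, ?_⟩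
  · rw [sum_Iic_add_single, sum_Iic_add_single]
    have hPk := hm k
    by_cases hik : i ≤ k <;> by_cases hjk : j ≤ k <;> simp only [hik, hjk, if_true, if_false]
    · omega
    · have : m i ≤ ∑ x ∈ Iic k, m x :=
        single_le_sum (fun x hx => hbefore x ((mem_Iic.1 hx).trans_lt (not_le.1 hjk)))
          (mem_Iic.2 hik)
      omega
    · omega
    · omega
  · have h₁ := sum_natAbs_add_single m i (-1)
    have h₂ := sum_natAbs_add_single (m + Pi.single i (-1)) j 1
    simp only [Pi.add_apply, Pi.single_eq_of_ne hij.ne', add_zero] at h₁ h₂ ⊢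
    omega
  · convert two_mem_typeBTwistedWeights_single_sub_single hij using 2
    ext k
    simp only [Pi.add_apply, Pi.sub_apply, Function.comp_apply, Int.cast_add, Pi.single_apply]
    split_ifs <;> simp

lemma exists_sub_short_root_of_nonneg {m : Fin n → ℤ} (hm : ∀ j, 0 ≤ m j) (hpos : ∃ j, 0 < m j) :
    ∃ m' : Fin n → ℤ, PrefixNonneg m' ∧ ∑ k, (m' k).natAbs + 1 = ∑ k, (m k).natAbs ∧
      1 ∈ typeBTwistedWeights n ((↑) ∘ m - (↑) ∘ m' : Fin n → ℝ) := by
  obtain ⟨j, hj⟩ := hpos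
  refine ⟨m + Pi.single j (-1), fun k => ?_, ?_, ?_⟩
  · rw [sum_Iic_add_single]
    by_cases hjk : j ≤ k
    · have : m j ≤ ∑ x ∈ Iic k, m x := single_le_sum (fun x _ => hm x) (mem_Iic.2 hjk)
      simp only [hjk, if_true]
      omega
    · simpa [hjk] using sum_nonneg fun x _ => hm x
  · have := sum_natAbs_add_single m j (-1)
    omega
  · convert one_mem_typeBTwistedWeights_single j using 2
    ext k
    simp only [Pi.add_apply, Pi.sub_apply, Function.comp_apply, Int.cast_add, Pi.single_apply]
    split_ifs <;> simp

lemma PrefixNonneg.exists_sub_root {m : Fin n → ℤ} (hm : PrefixNonneg m) (h0 : m ≠ 0) :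
    ∃ m' : Fin n → ℤ, PrefixNonneg m' ∧ ∃ d, 0 < d ∧ ∑ k, (m' k).natAbs + d = ∑ k, (m k).natAbs ∧
      d ∈ typeBTwistedWeights n ((↑) ∘ m - (↑) ∘ m' : Fin n → ℝ) := by
  by_cases hneg : ∃ j, m j < 0
  · obtain ⟨m', hm', hsum, hmem⟩ := hm.exists_sub_long_root hneg
    exact ⟨m', hm', 2, two_pos, hsum, hmem⟩
  · push Not at hneg
    obtain ⟨j, hj⟩ : ∃ j, m j ≠ 0 := by simpa [funext_iff] using h0
    obtain ⟨m', hm', hsum, hmem⟩ := exists_sub_short_root_of_nonneg hneg ⟨j, (hneg j).lt_of_ne' hj⟩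
    exact ⟨m', hm', 1, one_pos, hsum, hmem⟩

lemma PrefixNonneg.sum_natAbs_mem_typeBTwistedWeights {m : Fin n → ℤ} (hm : PrefixNonneg m) :
    ∑ k, (m k).natAbs ∈ typeBTwistedWeights n ((↑) ∘ m) := by
  induction hN : ∑ k, (m k).natAbs using Nat.strong_induction_on generalizing m with
  | _ N ih =>
  rcases eq_or_ne m 0 with rfl | h0
  · rw [← hN]
    convert zero_mem_typeBTwistedWeights_zero using 2 <;> simp
  obtain ⟨m', hm', d, hd, hsum, hmem⟩ := hm.exists_sub_root h0
  rw [← hsum] at hN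
  rw [← hN]
  simpa using add_mem_typeBTwistedWeights (ih _ (by omega) hm' rfl) hmem

lemma sum_abs_intCast (m : Fin n → ℤ) : ∑ k, |(m k : ℝ)| = ∑ k, (m k).natAbs := by
  push_cast [Nat.cast_natAbs]
  rfl

theorem PrefixNonneg.isLeast_typeBTwistedWeights {m : Fin n → ℤ} (hm : PrefixNonneg m) :
    IsLeast (typeBTwistedWeights n ((↑) ∘ m)) (∑ k, (m k).natAbs) :=
  ⟨hm.sum_natAbs_mem_typeBTwistedWeights, fun N hN => by
    exact_mod_cast (sum_abs_intCast m).symm.trans_le (sum_abs_le_of_mem_typeBTwistedWeights hN)⟩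

lemma sum_natAbs_add {ι : Type*} [Fintype ι] {p q : ι → ℤ}
    (h : ∀ j, 0 ≤ p j ∧ 0 ≤ q j ∨ p j ≤ 0 ∧ q j ≤ 0) :
    ∑ j, (p j + q j).natAbs = ∑ j, (p j).natAbs + ∑ j, (q j).natAbs := by
  rw [← sum_add_distrib]
  refine sum_congr rfl fun j _ => ?_
  rcases h j with ⟨hp, hq⟩ | ⟨hp, hq⟩
  exacts [Int.natAbs_add_of_nonneg hp hq, Int.natAbs_add_of_nonpos hp hq]

lemma sum_le_sum_Iic_of_antitone {ι M : Type*} [LinearOrder ι] [LocallyFiniteOrderBot ι]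
    [AddCommMonoid M] [PartialOrder M] [IsOrderedAddMonoid M] {f : ι → M} (hf : Antitone f)
    (k : ι) {G : Finset ι} (hG : #G = #(Iic k)) :
    ∑ x ∈ G, f x ≤ ∑ x ∈ Iic k, f x := by
  classical
  have hout : ∑ x ∈ G \ Iic k, f x ≤ ∑ x ∈ Iic k \ G, f x :=
    calc ∑ x ∈ G \ Iic k, f x ≤ #(G \ Iic k) • f k :=
          sum_le_card_nsmul _ _ _ fun x hx => hf (not_le.1 fun h => (mem_sdiff.1 hx).2
            (mem_Iic.2 h)).le
      _ = #(Iic k \ G) • f k := by rw [card_sdiff_comm hG]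
      _ ≤ ∑ x ∈ Iic k \ G, f x :=
          card_nsmul_le_sum _ _ _ fun x hx => hf (mem_Iic.1 (mem_sdiff.1 hx).1)
  rw [← sum_inter_add_sum_sdiff G (Iic k), ← sum_inter_add_sum_sdiff (Iic k) G, inter_comm]
  gcongr

/-- `signedPermAct σ s v` is `w(v)` for the signed permutation `w(ε_i) = s i • ε_{σ i}`. -/
def signedPermAct (σ : Equiv.Perm (Fin n)) (s : Fin n → ℝ) (v : Fin n → ℝ) : Fin n → ℝ :=
  fun j => s (σ.symm j) * v (σ.symm j)

variable (σ : Equiv.Perm (Fin n)) {s : Fin n → ℝ} {lam : Fin n → ℝ}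

lemma sub_signedPermAct_add (mu : Fin n → ℝ) :
    (lam + mu) - signedPermAct σ s (lam + mu) =
      (lam - signedPermAct σ s lam) + (mu - signedPermAct σ s mu) := by
  ext j
  simp only [Pi.add_apply, Pi.sub_apply, signedPermAct]
  ring

lemma prefixNonneg_sub_signedPermAct (hs : ∀ i, s i = 1 ∨ s i = -1) (hanti : Antitone lam) (hnonneg : ∀ i, 0 ≤ lam i) :
    PrefixNonneg (lam - signedPermAct σ s lam) := fun k => by
  have hsign : ∀ j, s (σ.symm j) * lam (σ.symm j) ≤ lam (σ.symm j) := fun j => by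
    rcases hs (σ.symm j) with h | h <;> simp only [h] <;> linarith [hnonneg (σ.symm j)]
  have hperm : ∑ j ∈ Iic k, lam (σ.symm j) ≤ ∑ j ∈ Iic k, lam j :=
    (sum_map _ σ.symm.toEmbedding lam).symm.trans_le
      (sum_le_sum_Iic_of_antitone hanti k (card_map _))
  simp only [Pi.sub_apply, signedPermAct, sum_sub_distrib, sub_nonneg]
  exact (sum_le_sum fun j _ => hsign j).trans hperm

/-- `(λ - w λ) j` is `≥ 0` if `s (σ⁻¹ j) = -1` or `j ≤ σ⁻¹ j`, and `≤ 0` otherwise, whatever the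
dominant `λ`. -/
lemma sub_signedPermAct_same_sign (hs : ∀ i, s i = 1 ∨ s i = -1) {mu : Fin n → ℝ} (hlam : Antitone lam)
    (hlam₀ : ∀ i, 0 ≤ lam i) (hmu : Antitone mu) (hmu₀ : ∀ i, 0 ≤ mu i) (j : Fin n) :
    0 ≤ (lam - signedPermAct σ s lam) j ∧ 0 ≤ (mu - signedPermAct σ s mu) j ∨
      (lam - signedPermAct σ s lam) j ≤ 0 ∧ (mu - signedPermAct σ s mu) j ≤ 0 := by
  simp only [Pi.sub_apply, signedPermAct]
  rcases hs (σ.symm j) with h | h <;> rw [h]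
  · rcases le_total j (σ.symm j) with hj | hj
    · exact Or.inl ⟨by linarith [hlam hj], by linarith [hmu hj]⟩
    · exact Or.inr ⟨by linarith [hlam hj], by linarith [hmu hj]⟩
  · exact Or.inl ⟨by linarith [hlam₀ j, hlam₀ (σ.symm j)], by linarith [hmu₀ j, hmu₀ (σ.symm j)]⟩

lemma exists_intCast_eq_sub_signedPermAct (hs : ∀ i, s i = 1 ∨ s i = -1)
    (hint : (∀ i, ∃ k : ℤ, lam i = k) ∨ (∀ i, ∃ k : ℤ, lam i = k + 1/2)) :
    ∃ m : Fin n → ℤ, (↑) ∘ m = lam - signedPermAct σ s lam := by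
  have hentry : ∀ j, ∃ z : ℤ, lam j - s (σ.symm j) * lam (σ.symm j) = z := fun j => by
    rcases hint with h | h <;> obtain ⟨a, ha⟩ := h j <;> obtain ⟨b, hb⟩ := h (σ.symm j) <;>
      rw [ha, hb] <;> rcases hs (σ.symm j) with h | h <;> rw [h]
    exacts [⟨a - b, by push_cast; ring⟩, ⟨a + b, by push_cast; ring⟩,
      ⟨a - b, by push_cast; ring⟩, ⟨a + b + 1, by push_cast; ring⟩]
  choose m hm using hentry
  exact ⟨m, funext fun j => (hm j).symm⟩

end

theorem twisted_kostant_additivity_typeB_general (n : ℕ)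
    (lam mu : Fin n → ℝ) (hlam : IsDominantB n lam) (hmu : IsDominantB n mu)
    (σ : Equiv.Perm (Fin n)) (s : Fin n → ℝ) (hs : ∀ i, s i = 1 ∨ s i = -1) :
    ∃ a b : ℕ,
      IsLeast (typeBTwistedWeights n
        (fun j => lam j - s (σ.symm j) * lam (σ.symm j))) a ∧
      IsLeast (typeBTwistedWeights n
        (fun j => mu j - s (σ.symm j) * mu (σ.symm j))) b ∧
      IsLeast (typeBTwistedWeights n
        (fun j => (lam j + mu j) - s (σ.symm j) * (lam (σ.symm j) + mu (σ.symm j))))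
        (a + b) := by
  obtain ⟨hlam_anti, hlam₀, hlam_int⟩ := hlam
  obtain ⟨hmu_anti, hmu₀, hmu_int⟩ := hmu
  obtain ⟨p, hp⟩ := exists_intCast_eq_sub_signedPermAct σ hs hlam_int
  obtain ⟨q, hq⟩ := exists_intCast_eq_sub_signedPermAct σ hs hmu_int
  have hp₀ : PrefixNonneg p := prefixNonneg_intCast_iff.1
    (hp ▸ prefixNonneg_sub_signedPermAct σ hs hlam_anti hlam₀)
  have hq₀ : PrefixNonneg q := prefixNonneg_intCast_iff.1
    (hq ▸ prefixNonneg_sub_signedPermAct σ hs hmu_anti hmu₀)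
  have hsign (j : Fin n) : 0 ≤ p j ∧ 0 ≤ q j ∨ p j ≤ 0 ∧ q j ≤ 0 := by
    have h := sub_signedPermAct_same_sign σ hs hlam_anti hlam₀ hmu_anti hmu₀ j
    rw [← hp, ← hq] at h
    simp only [Function.comp_apply] at h
    exact_mod_cast h
  have hvec : ((↑) ∘ (p + q) : Fin n → ℝ) = (lam + mu) - signedPermAct σ s (lam + mu) := by
    rw [sub_signedPermAct_add, ← hp, ← hq]
    ext
    simp
  refine ⟨_, _, hp ▸ hp₀.isLeast_typeBTwistedWeights, hq ▸ hq₀.isLeast_typeBTwistedWeights, ?_⟩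
  have hpq := (hp₀.add hq₀).isLeast_typeBTwistedWeights
  rw [hvec] at hpq
  rwa [← sum_natAbs_add hsign]

/-- Total additivity of the twisted extremal Kostant degree in type `B_n`:
for dominant weights `λ, μ` and any signed permutation `w` (encoded by a permutation
`σ` and signs `s i ∈ {±1}`, acting by `w(ε_i) = s(i) • ε_{σ(i)}`),
`n^ν(λ + μ, w) = n^ν(λ, w) + n^ν(μ, w)`. -/
theorem twisted_kostant_additivity_typeB (n : ℕ) (hn : 2 ≤ n)
    (lam mu : Fin n → ℝ) (hlam : IsDominantB n lam) (hmu : IsDominantB n mu)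
    (σ : Equiv.Perm (Fin n)) (s : Fin n → ℝ) (hs : ∀ i, s i = 1 ∨ s i = -1) :
    ∃ a b : ℕ,
      IsLeast (typeBTwistedWeights n
        (fun j => lam j - s (σ.symm j) * lam (σ.symm j))) a ∧
      IsLeast (typeBTwistedWeights n
        (fun j => mu j - s (σ.symm j) * mu (σ.symm j))) b ∧
      IsLeast (typeBTwistedWeights n
        (fun j => (lam j + mu j) - s (σ.symm j) * (lam (σ.symm j) + mu (σ.symm j))))
        (a + b) :=
  twisted_kostant_additivity_typeB_general n lam mu hlam hmu σ s hs
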